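/- Let F be a simple graph, G a group, and φ : G → Aut(F) an injective group homomorphism. Suppose that (a) every g ∈ G such that φ(g) fixes pointwise the vertex set of every connected component of F with at most one exception satisfies g = 1; and (b) there exist g ∈ G and a connected component Γ of F such that φ(g) maps the vertex set of Γ onto itself and does not fix Γ pointwise. Then φ is not surjective; that is, φ embeds G as a proper subgroup of Aut(F). -/

import Mathlib

/-!
Extending an automorphism of `F` that preserves a component `Γ` by the identity off `Γ` gives an
automorphism `ψ` of `F`, since no edge leaves `Γ`. If `ψ = φ h`, then `φ h` fixes every component
other than `Γ` pointwise, so `h = 1` by (a); but `ψ` moves a vertex of `Γ` by (b), a contradiction.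
-/

namespace SimpleGraph

variable {V : Type*} {F : SimpleGraph V}

lemma Iso.apply_mem_supp_iff_of_image_supp_eq {e : F ≃g F} {Γ : F.ConnectedComponent}
    (he : (e : V → V) '' Γ.supp = Γ.supp) (v : V) : e v ∈ Γ.supp ↔ v ∈ Γ.supp := by
  have hv := e.injective.mem_set_image (s := Γ.supp) (a := v)
  rwa [he] at hv

def Iso.restrictComponent (e : F ≃g F) (Γ : F.ConnectedComponent)
    [DecidablePred (· ∈ Γ.supp)] (he : ∀ v, e v ∈ Γ.supp ↔ v ∈ Γ.supp) : F ≃g F where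
  toEquiv := Equiv.Perm.ofSubtype (Equiv.Perm.subtypePerm e.toEquiv he)
  map_rel_iff' {x y} := by
    have hmem := Equiv.Perm.ofSubtype_apply_mem_iff_mem (Equiv.Perm.subtypePerm e.toEquiv he)
    have hcongr := fun {a b} (hab : F.Adj a b) => Γ.mem_supp_congr_adj hab
    by_cases hx : x ∈ Γ.supp <;> by_cases hy : y ∈ Γ.supp
    · rw [Equiv.Perm.ofSubtype_subtypePerm_of_mem he hx,
        Equiv.Perm.ofSubtype_subtypePerm_of_mem he hy]
      exact e.map_adj_iff
    · exact iff_of_false (fun hadj => hy ((hmem y).1 ((hcongr hadj).1 ((hmem x).2 hx))))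
        (fun hadj => hy ((hcongr hadj).1 hx))
    · exact iff_of_false (fun hadj => hx ((hmem x).1 ((hcongr hadj).2 ((hmem y).2 hy))))
        (fun hadj => hx ((hcongr hadj).2 hy))
    · rw [Equiv.Perm.ofSubtype_subtypePerm_of_not_mem he hx,
        Equiv.Perm.ofSubtype_subtypePerm_of_not_mem he hy]

section restrictComponent

variable (e : F ≃g F) (Γ : F.ConnectedComponent) [DecidablePred (· ∈ Γ.supp)]
  (he : ∀ v, e v ∈ Γ.supp ↔ v ∈ Γ.supp) {v : V}

lemma Iso.restrictComponent_apply_of_mem (hv : v ∈ Γ.supp) :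
    e.restrictComponent Γ he v = e v :=
  Equiv.Perm.ofSubtype_subtypePerm_of_mem he hv

lemma Iso.restrictComponent_apply_of_notMem (hv : v ∉ Γ.supp) :
    e.restrictComponent Γ he v = v :=
  Equiv.Perm.ofSubtype_subtypePerm_of_not_mem he hv

end restrictComponent

end SimpleGraph

theorem stmt_3_general {V G : Type*} [Group G] (F : SimpleGraph V)
    (φ : G →* (F ≃g F))
    (ha : ∀ g : G, (∃ Γ₀ : F.ConnectedComponent, ∀ C : F.ConnectedComponent,
        C ≠ Γ₀ → ∀ v ∈ C.supp, (φ g) v = v) → g = 1)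
    (hb : ∃ (g : G) (Γ : F.ConnectedComponent),
        ((φ g : V → V) '' Γ.supp = Γ.supp) ∧ ∃ v ∈ Γ.supp, (φ g) v ≠ v) :
    ¬ Function.Surjective φ := by
  classical
  intro hsurj
  obtain ⟨g, Γ, himg, v, hv, hmoved⟩ := hb
  have hΓ := SimpleGraph.Iso.apply_mem_supp_iff_of_image_supp_eq himg
  obtain ⟨h, hh⟩ := hsurj ((φ g).restrictComponent Γ hΓ)
  have h_one : h = 1 := ha h ⟨Γ, fun C hC w hw => by
    rw [hh]
    exact SimpleGraph.Iso.restrictComponent_apply_of_notMem _ _ _ fun hwΓ =>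
      hC (SimpleGraph.ConnectedComponent.eq_of_common_vertex hw hwΓ)⟩
  apply hmoved
  calc φ g v = (φ g).restrictComponent Γ hΓ v :=
        (SimpleGraph.Iso.restrictComponent_apply_of_mem _ _ _ hv).symm
    _ = φ h v := by rw [hh]
    _ = v := by rw [h_one, map_one]; rfl

/-- If `φ : G →* Aut(F)` is an injective group homomorphism such
that (a) any `g` whose image fixes pointwise the vertex set of every connected
component with at most one exception is trivial, and (b) some `φ g` maps the
vertex set of a connected component `Γ` onto itself without fixing it
pointwise, then `φ` is not surjective, i.e. it embeds `G` as a proper subgroup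
of `Aut(F)`. -/
theorem stmt_3 {V G : Type*} [Group G] (F : SimpleGraph V)
    (φ : G →* (F ≃g F)) (hinj : Function.Injective φ)
    (ha : ∀ g : G, (∃ Γ₀ : F.ConnectedComponent, ∀ C : F.ConnectedComponent,
        C ≠ Γ₀ → ∀ v ∈ C.supp, (φ g) v = v) → g = 1)
    (hb : ∃ (g : G) (Γ : F.ConnectedComponent),
        ((φ g : V → V) '' Γ.supp = Γ.supp) ∧ ∃ v ∈ Γ.supp, (φ g) v ≠ v) :
    ¬ Function.Surjective φ :=
  stmt_3_general F φ ha hb
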